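/- Let N ∈ ℕ and let A be an N×N real symmetric matrix with nonnegative entries. Define the step-function graphon h^A:[0,1]^2→ℝ by h^A(x,y) = A_{⌈Nx⌉,⌈Ny⌉} (with the convention ⌈0⌉ = 1). Then the largest eigenvalue of A equals N·‖T_{h^A}‖, where T_{h^A} is the integral operator on L^2([0,1]) with kernel h^A and ‖T_{h^A}‖ its operator norm. -/

import Mathlib

/-!
With `J i = (i/N, (i+1)/N]`, the kernel `h^A` equals `A i j` on `J i × J j`, so the quadratic
form `∫∫ u h^A u` equals `a ⬝ᵥ A *ᵥ a`, where `a i` is the integral of `u` over `J i`, and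
Jensen's inequality on each cell gives `a ⬝ᵥ a ≤ ‖u‖² / N`. As `A` is nonnegative,
`|a ⬝ᵥ A *ᵥ a| ≤ |a| ⬝ᵥ A *ᵥ |a| ≤ λ_max ‖a‖²`, so the form is at most `λ_max / N` on the unit
ball, and the step function of a suitably normalised top eigenvector attains this value.
-/

open MeasureTheory Real Filter Set Topology

noncomputable section

/-- The unit interval `[0,1]` as a subset of `ℝ`. -/
def UI : Set ℝ := Set.Icc 0 1

/-- A graphon: a symmetric measurable function `[0,1]² → [0,1]`. -/
def IsGraphon (h : ℝ → ℝ → ℝ) : Prop :=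
  Measurable (Function.uncurry h) ∧ (∀ x y, h x y = h y x) ∧
    ∀ x ∈ UI, ∀ y ∈ UI, h x y ∈ Set.Icc (0:ℝ) 1

/-- The operator norm of the integral operator `T_h` on `L²([0,1])` associated with a
symmetric bounded kernel `h`, expressed via its quadratic form. -/
def gOpNorm (h : ℝ → ℝ → ℝ) : ℝ :=
  sSup {t : ℝ | ∃ u : ℝ → ℝ, Measurable u ∧ IntegrableOn (fun x => u x ^ 2) UI ∧
    (∫ x in UI, u x ^ 2) ≤ 1 ∧ t = |∫ x in UI, ∫ y in UI, u x * h x y * u y|}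

/-- Relative entropy of Bernoulli(a) with respect to Bernoulli(b), with `0 log 0 = 0`. -/
def relEnt (a b : ℝ) : ℝ :=
  a * Real.log (a / b) + (1 - a) * Real.log ((1 - a) / (1 - b))

/-- The rate function `I_r(h) = ∫∫ R(h(x,y) | r(x,y)) dx dy`. -/
def Ient (r h : ℝ → ℝ → ℝ) : ℝ := ∫ x in UI, ∫ y in UI, relEnt (h x y) (r x y)

/-- The rate function `ψ_r(β) = inf { I_r(h) : h graphon, ‖T_h‖ = β }`. -/
def psiRate (r : ℝ → ℝ → ℝ) (β : ℝ) : ℝ :=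
  sInf {c : ℝ | ∃ h : ℝ → ℝ → ℝ, IsGraphon h ∧ gOpNorm h = β ∧ Ient r h = c}

/-- The `L²([0,1]²)` norm of a kernel. -/
def L2norm2 (f : ℝ → ℝ → ℝ) : ℝ := Real.sqrt (∫ x in UI, ∫ y in UI, f x y ^ 2)

end

noncomputable section

/-- The index ⌈Nx⌉ (clamped to {1,…,N}, with the convention ⌈0⌉ = 1), shifted to Fin N. -/
def ceilIdx (N : ℕ) (hN : 0 < N) (x : ℝ) : Fin N :=
  ⟨max 1 (min N (Nat.ceil ((N : ℝ) * x))) - 1, by omega⟩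

/-- Largest eigenvalue of a real matrix. -/
def maxEig {N : ℕ} (M : Matrix (Fin N) (Fin N) ℝ) : ℝ :=
  sSup {t : ℝ | ∃ v : Fin N → ℝ, v ≠ 0 ∧ M.mulVec v = t • v}

end

open MeasureTheory Set Matrix

theorem LinearMap.IsSymmetric.exists_hasEigenvalue_inner_le {E : Type*} [NormedAddCommGroup E]
    [InnerProductSpace ℝ E] [FiniteDimensional ℝ E] [Nontrivial E] {T : E →ₗ[ℝ] E}
    (hT : T.IsSymmetric) :
    ∃ μ : ℝ, Module.End.HasEigenvalue T μ ∧ ∀ x, inner ℝ (T x) x ≤ μ * ‖x‖ ^ 2 := by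
  refine ⟨_, hT.hasEigenvalue_iSup_of_finiteDimensional, fun x => ?_⟩
  rcases eq_or_ne x 0 with rfl | hx
  · simp
  let T' := LinearMap.toContinuousLinearMap T
  have hbdd : BddAbove (Set.range fun x : { x : E // x ≠ 0 } => T'.rayleighQuotient x) :=
    ⟨‖T'‖, by rintro _ ⟨x, rfl⟩; exact (le_abs_self _).trans (T'.rayleighQuotient_le_norm x)⟩
  have hx' := le_ciSup hbdd ⟨x, hx⟩
  rwa [ContinuousLinearMap.rayleighQuotient, div_le_iff₀ (by positivity)] at hx'

theorem Matrix.IsSymm.exists_eigenvalue_dotProduct_le {n : Type*} [Fintype n] [DecidableEq n]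
    [Nonempty n] {A : Matrix n n ℝ} (hA : A.IsSymm) :
    ∃ μ : ℝ, (∃ v ≠ 0, A *ᵥ v = μ • v) ∧ ∀ v, v ⬝ᵥ A *ᵥ v ≤ μ * (v ⬝ᵥ v) := by
  obtain ⟨μ, hμ, hle⟩ := (isSymmetric_toEuclideanLin_iff.mpr hA).exists_hasEigenvalue_inner_le
  obtain ⟨x, hx⟩ := hμ.exists_hasEigenvector
  refine ⟨μ, ⟨x.ofLp, by simpa using hx.2, congrArg WithLp.ofLp hx.apply_eq_smul⟩, fun v => ?_⟩
  have hv := hle (WithLp.toLp 2 v)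
  rw [← real_inner_self_eq_norm_sq, EuclideanSpace.inner_eq_star_dotProduct,
    EuclideanSpace.inner_eq_star_dotProduct, toLpLin_apply] at hv
  simpa using hv

theorem Matrix.diag_le_of_dotProduct_le {n : Type*} [Fintype n] [DecidableEq n]
    {A : Matrix n n ℝ} {μ : ℝ} (hle : ∀ v, v ⬝ᵥ A *ᵥ v ≤ μ * (v ⬝ᵥ v)) (i : n) : A i i ≤ μ := by
  simpa [mulVec_single, single_dotProduct] using hle (Pi.single i 1)

theorem Matrix.abs_dotProduct_mulVec_le {n : Type*} [Fintype n] {A : Matrix n n ℝ}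
    (hA : ∀ i j, 0 ≤ A i j) (v : n → ℝ) :
    |v ⬝ᵥ A *ᵥ v| ≤ (fun i => |v i|) ⬝ᵥ A *ᵥ fun i => |v i| := by
  simp only [dotProduct, mulVec]
  refine (Finset.abs_sum_le_sum_abs _ _).trans (Finset.sum_le_sum fun i _ => ?_)
  rw [abs_mul]
  refine mul_le_mul_of_nonneg_left ((Finset.abs_sum_le_sum_abs _ _).trans_eq ?_) (abs_nonneg _)
  simp only [abs_mul, abs_of_nonneg (hA i _)]

theorem maxEig_eq_of_dotProduct_le {N : ℕ} {A : Matrix (Fin N) (Fin N) ℝ} {μ : ℝ}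
    (hμ : ∃ v ≠ 0, A *ᵥ v = μ • v) (hle : ∀ v, v ⬝ᵥ A *ᵥ v ≤ μ * (v ⬝ᵥ v)) : maxEig A = μ := by
  refine IsGreatest.csSup_eq ⟨hμ, ?_⟩
  rintro t ⟨v, hv, hAv⟩
  have hpos : 0 < v ⬝ᵥ v := by simpa using dotProduct_star_self_pos_iff.mpr hv
  have := hle v
  rw [hAv, dotProduct_smul, smul_eq_mul] at this
  exact le_of_mul_le_mul_right this hpos

theorem sq_setIntegral_le_measureReal_mul {α : Type*} [MeasurableSpace α] {μ : Measure α}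
    {s : Set α} {f : α → ℝ} (hs0 : μ s ≠ 0) (hs : μ s ≠ ⊤) (hf : IntegrableOn f s μ)
    (hf2 : IntegrableOn (fun x => f x ^ 2) s μ) :
    (∫ x in s, f x ∂μ) ^ 2 ≤ μ.real s * ∫ x in s, f x ^ 2 ∂μ := by
  have hjensen := (even_two.convexOn_pow (𝕜 := ℝ)).map_set_average_le (continuousOn_pow 2)
    isClosed_univ hs0 hs (ae_of_all _ fun _ => mem_univ _) hf hf2
  have hpos : 0 < μ.real s := ENNReal.toReal_pos hs0 hs
  simp only [setAverage_eq, smul_eq_mul, mul_pow] at hjensen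
  field_simp at hjensen
  linarith

def stepCell (N : ℕ) (i : Fin N) : Set ℝ := Ioc ((i : ℝ) / N) (((i : ℝ) + 1) / N)

section StepCells

variable {N : ℕ}

theorem Icc_div_subset_UI {k : ℕ} (hk : k < N) : Icc ((k : ℝ) / N) (((k : ℝ) + 1) / N) ⊆ UI := by
  have hN : (0 : ℝ) < N := by have := Nat.zero_lt_of_lt hk; positivity
  have hk' : (k : ℝ) + 1 ≤ N := by exact_mod_cast hk
  refine Icc_subset_Icc (by positivity) ?_
  rwa [div_le_one hN]

theorem stepCell_subset_UI (i : Fin N) : stepCell N i ⊆ UI :=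
  Ioc_subset_Icc_self.trans (Icc_div_subset_UI i.is_lt)

theorem measurableSet_stepCell (i : Fin N) : MeasurableSet (stepCell N i) :=
  measurableSet_Ioc

theorem volume_stepCell (i : Fin N) : volume (stepCell N i) = ENNReal.ofReal (1 / N) := by
  rw [stepCell, Real.volume_Ioc]
  congr 1
  ring

theorem measureReal_stepCell (i : Fin N) : volume.real (stepCell N i) = 1 / N := by
  rw [measureReal_def, volume_stepCell, ENNReal.toReal_ofReal (by positivity)]

theorem integral_UI_eq_sum_stepCell (hN : 0 < N) {f : ℝ → ℝ} (hf : IntegrableOn f UI) :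
    ∫ x in UI, f x = ∑ i : Fin N, ∫ x in stepCell N i, f x := by
  have hint : ∀ k < N, IntervalIntegrable f volume ((k : ℝ) / N) (((k + 1 : ℕ) : ℝ) / N) := by
    intro k hk
    refine (hf.mono_set ?_).intervalIntegrable
    rw [uIcc_of_le (by gcongr; simp)]
    exact_mod_cast Icc_div_subset_UI hk
  have hsum := intervalIntegral.sum_integral_adjacent_intervals hint
  have hN' : (N : ℝ) ≠ 0 := Nat.cast_ne_zero.mpr hN.ne'
  simp only [Nat.cast_zero, zero_div, div_self hN'] at hsum
  rw [UI, integral_Icc_eq_integral_Ioc, ← intervalIntegral.integral_of_le zero_le_one, ← hsum,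
    ← Fin.sum_univ_eq_sum_range]
  refine Finset.sum_congr rfl fun i _ => ?_
  rw [intervalIntegral.integral_of_le (by gcongr; simp), stepCell]
  push_cast
  rfl

theorem ceilIdx_eq_of_mem_stepCell (hN : 0 < N) {i : Fin N} {x : ℝ} (hx : x ∈ stepCell N i) :
    ceilIdx N hN x = i := by
  obtain ⟨hlo, hhi⟩ := hx
  have hN' : (0 : ℝ) < N := by exact_mod_cast hN
  have hceil : ⌈(N : ℝ) * x⌉₊ = (i : ℕ) + 1 := by
    rw [Nat.ceil_eq_iff (Nat.succ_ne_zero _)]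
    push_cast
    constructor
    · rwa [div_lt_iff₀ hN', mul_comm] at hlo
    · rwa [le_div_iff₀ hN', mul_comm] at hhi
  ext
  simp only [ceilIdx, hceil]
  omega

theorem measurable_ceilIdx (hN : 0 < N) : Measurable (ceilIdx N hN) :=
  (measurable_from_top (f := fun n : ℕ => (⟨max 1 (min N n) - 1, by omega⟩ : Fin N))).comp
    (Nat.measurable_ceil.comp (measurable_const_mul _))

end StepCells

section StepFunctions

variable {N : ℕ} (hN : 0 < N)

noncomputable def cellIntegrals (N : ℕ) (u : ℝ → ℝ) : Fin N → ℝ :=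
  fun i => ∫ x in stepCell N i, u x

include hN

theorem integrableOn_step (g : Fin N → ℝ) : IntegrableOn (fun x => g (ceilIdx N hN x)) UI :=
  Measure.integrableOn_of_bounded (M := ‖g‖) (by simp [UI])
    (measurable_from_top.comp (measurable_ceilIdx hN)).aestronglyMeasurable
    (ae_of_all _ fun _ => norm_le_pi_norm g _)

theorem integrableOn_step_mul (g : Fin N → ℝ) {u : ℝ → ℝ} (hu : IntegrableOn u UI) :
    IntegrableOn (fun x => g (ceilIdx N hN x) * u x) UI :=
  hu.bdd_mul (measurable_from_top.comp (measurable_ceilIdx hN)).aestronglyMeasurable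
    (ae_of_all _ fun _ => norm_le_pi_norm g _)

theorem integral_step_mul (g : Fin N → ℝ) {u : ℝ → ℝ} (hu : IntegrableOn u UI) :
    ∫ x in UI, g (ceilIdx N hN x) * u x = g ⬝ᵥ cellIntegrals N u := by
  rw [integral_UI_eq_sum_stepCell hN (integrableOn_step_mul hN g hu)]
  refine Finset.sum_congr rfl fun i _ => ?_
  rw [cellIntegrals, ← integral_const_mul]
  exact setIntegral_congr_fun (measurableSet_stepCell i) fun x hx => by
    rw [ceilIdx_eq_of_mem_stepCell hN hx]

theorem cellIntegrals_step (g : Fin N → ℝ) :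
    cellIntegrals N (fun x => g (ceilIdx N hN x)) = (N : ℝ)⁻¹ • g := by
  ext i
  rw [cellIntegrals, setIntegral_congr_fun (measurableSet_stepCell i) (g := fun _ => g i)
    fun x hx => by rw [ceilIdx_eq_of_mem_stepCell hN hx], setIntegral_const, measureReal_stepCell]
  simp [mul_comm]

theorem integral_sq_step (w : Fin N → ℝ) :
    ∫ x in UI, w (ceilIdx N hN x) ^ 2 = (w ⬝ᵥ w) / N := by
  simp_rw [sq]
  rw [integral_step_mul hN w (integrableOn_step hN w), cellIntegrals_step hN, dotProduct_smul,
    smul_eq_mul, inv_mul_eq_div]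

theorem integral_integral_step_kernel (A : Matrix (Fin N) (Fin N) ℝ) {u : ℝ → ℝ}
    (hu : IntegrableOn u UI) :
    ∫ x in UI, ∫ y in UI, u x * A (ceilIdx N hN x) (ceilIdx N hN y) * u y
      = cellIntegrals N u ⬝ᵥ A *ᵥ cellIntegrals N u := by
  have hinner : ∀ x, ∫ y in UI, u x * A (ceilIdx N hN x) (ceilIdx N hN y) * u y
      = (A *ᵥ cellIntegrals N u) (ceilIdx N hN x) * u x := fun x => by
    rw [integral_step_mul hN (fun j => u x * A (ceilIdx N hN x) j) hu, mulVec, dotProduct,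
      dotProduct, Finset.sum_mul]
    exact Finset.sum_congr rfl fun j _ => by ring
  simp_rw [hinner]
  rw [integral_step_mul hN _ hu, dotProduct_comm]

theorem integral_integral_step_kernel_step (A : Matrix (Fin N) (Fin N) ℝ) (w : Fin N → ℝ) :
    ∫ x in UI, ∫ y in UI, w (ceilIdx N hN x) * A (ceilIdx N hN x) (ceilIdx N hN y) *
      w (ceilIdx N hN y) = (w ⬝ᵥ A *ᵥ w) / N ^ 2 := by
  rw [integral_integral_step_kernel hN A (integrableOn_step hN w), cellIntegrals_step hN,
    mulVec_smul, dotProduct_smul, smul_dotProduct, smul_eq_mul, smul_eq_mul]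
  field_simp

theorem dotProduct_cellIntegrals_le {u : ℝ → ℝ} (hu : IntegrableOn u UI)
    (hu2 : IntegrableOn (fun x => u x ^ 2) UI) :
    cellIntegrals N u ⬝ᵥ cellIntegrals N u ≤ (∫ x in UI, u x ^ 2) / N := by
  rw [integral_UI_eq_sum_stepCell hN hu2, Finset.sum_div]
  refine Finset.sum_le_sum fun i _ => ?_
  have hcell := sq_setIntegral_le_measureReal_mul (by simp [volume_stepCell, hN])
    (by simp [volume_stepCell]) (hu.mono_set (stepCell_subset_UI i))
    (hu2.mono_set (stepCell_subset_UI i))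
  rw [measureReal_stepCell, one_div_mul_eq_div] at hcell
  simpa [cellIntegrals, ← sq] using hcell

end StepFunctions

section StepKernel

variable {N : ℕ} (hN : 0 < N) {A : Matrix (Fin N) (Fin N) ℝ} {μ : ℝ}
include hN

theorem abs_integral_integral_step_kernel_le (hA : ∀ i j, 0 ≤ A i j) (hμ : 0 ≤ μ)
    (hle : ∀ v, v ⬝ᵥ A *ᵥ v ≤ μ * (v ⬝ᵥ v)) {u : ℝ → ℝ} (hu : IntegrableOn u UI)
    (hu2 : IntegrableOn (fun x => u x ^ 2) UI) :
    |∫ x in UI, ∫ y in UI, u x * A (ceilIdx N hN x) (ceilIdx N hN y) * u y|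
      ≤ μ / N * ∫ x in UI, u x ^ 2 := by
  set a := cellIntegrals N u
  have habs : (fun i => |a i|) ⬝ᵥ (fun i => |a i|) = a ⬝ᵥ a := by
    simp only [dotProduct, abs_mul_abs_self]
  rw [integral_integral_step_kernel hN A hu]
  calc |a ⬝ᵥ A *ᵥ a| ≤ (fun i => |a i|) ⬝ᵥ A *ᵥ fun i => |a i| := abs_dotProduct_mulVec_le hA a
    _ ≤ μ * (a ⬝ᵥ a) := habs ▸ hle _
    _ ≤ μ * ((∫ x in UI, u x ^ 2) / N) := by gcongr; exact dotProduct_cellIntegrals_le hN hu hu2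
    _ = μ / N * ∫ x in UI, u x ^ 2 := by ring

theorem exists_integral_integral_step_kernel_eq (hμ : ∃ v ≠ 0, A *ᵥ v = μ • v) :
    ∃ w : Fin N → ℝ, ∫ x in UI, w (ceilIdx N hN x) ^ 2 = 1 ∧
      ∫ x in UI, ∫ y in UI, w (ceilIdx N hN x) * A (ceilIdx N hN x) (ceilIdx N hN y) *
        w (ceilIdx N hN y) = μ / N := by
  obtain ⟨v, hv, hAv⟩ := hμ
  have hpos : 0 < v ⬝ᵥ v := by simpa using dotProduct_star_self_pos_iff.mpr hv
  have hN' : (0 : ℝ) < N := by exact_mod_cast hN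
  set c := √N / √(v ⬝ᵥ v)
  have hc : c * c = N / (v ⬝ᵥ v) := by
    rw [div_mul_div_comm, Real.mul_self_sqrt hN'.le, Real.mul_self_sqrt hpos.le]
  have hww : (c • v) ⬝ᵥ (c • v) = N := by
    rw [dotProduct_smul, smul_dotProduct, smul_eq_mul, smul_eq_mul, ← mul_assoc, hc]
    field_simp
  refine ⟨c • v, ?_, ?_⟩
  · rw [integral_sq_step hN, hww, div_self hN'.ne']
  · rw [integral_integral_step_kernel_step hN, mulVec_smul, hAv, smul_comm, dotProduct_smul, hww,
      smul_eq_mul]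
    field_simp

theorem gOpNorm_step_kernel_eq (hA : ∀ i j, 0 ≤ A i j) (hμ : ∃ v ≠ 0, A *ᵥ v = μ • v)
    (hle : ∀ v, v ⬝ᵥ A *ᵥ v ≤ μ * (v ⬝ᵥ v)) :
    gOpNorm (fun x y => A (ceilIdx N hN x) (ceilIdx N hN y)) = μ / N := by
  have hμ0 : 0 ≤ μ := (hA ⟨0, hN⟩ ⟨0, hN⟩).trans (diag_le_of_dotProduct_le hle _)
  refine IsGreatest.csSup_eq ⟨?_, ?_⟩
  · obtain ⟨w, hw2, hw⟩ := exists_integral_integral_step_kernel_eq hN hμ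
    refine ⟨fun x => w (ceilIdx N hN x), measurable_from_top.comp (measurable_ceilIdx hN),
      ?_, hw2.le, by rw [hw, abs_of_nonneg (by positivity)]⟩
    simpa only [sq] using integrableOn_step_mul hN w (integrableOn_step hN w)
  · rintro _ ⟨u, hm, hu2, hu2_le, rfl⟩
    have : IsFiniteMeasure (volume.restrict UI) := by rw [UI]; infer_instance
    have hu : IntegrableOn u UI :=
      ((memLp_two_iff_integrable_sq hm.aestronglyMeasurable).mpr hu2).integrable one_le_two
    calc _ ≤ μ / N * ∫ x in UI, u x ^ 2 :=
          abs_integral_integral_step_kernel_le hN hA hμ0 hle hu hu2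
      _ ≤ μ / N := mul_le_of_le_one_right (by positivity) hu2_le

end StepKernel

/-- the largest eigenvalue of a symmetric nonnegative N×N matrix A equals
N·‖T_{h^A}‖, where h^A(x,y) = A_{⌈Nx⌉,⌈Ny⌉}. -/
theorem maxEig_eq_opNorm_step_kernel
    (N : ℕ) (hN : 0 < N) (A : Matrix (Fin N) (Fin N) ℝ)
    (hsymm : A.IsSymm) (hnonneg : ∀ i j, 0 ≤ A i j) :
    maxEig A = N * gOpNorm (fun x y => A (ceilIdx N hN x) (ceilIdx N hN y)) := by
  have : Nonempty (Fin N) := ⟨⟨0, hN⟩⟩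
  obtain ⟨μ, hμ, hle⟩ := hsymm.exists_eigenvalue_dotProduct_le
  rw [maxEig_eq_of_dotProduct_le hμ hle, gOpNorm_step_kernel_eq hN hnonneg hμ hle]
  field_simp
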